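/- arXiv:1301.2678 — 2 statements merged into one kernel-verified Lean document; each statement's English description precedes it below -/
import Mathlib

section
/- Let P and P' be AC-MAS with P ≈ P' (bisimilar) and let s ∈ S, s' ∈ S' be bisimilar states (s ≈ s'). Then for every SA-FO-CTL formula φ, (P, s) ⊨ φ if and only if (P', s') ⊨ φ. -/
/-!  Common formalisation of artifact-centric multi-agent systems (AC-MAS). -/

open Set

/-- A database schema: a finite type of relation symbols, each with an arity. -/
structure Schema : Type 1 where
  Rel : Type
  [relFin : Fintype Rel]
  arity : Rel → ℕ

attribute [instance] Schema.relFin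

/-- A `D`-instance over an interpretation domain `U`: every relation symbol is
interpreted as a finite set of tuples over `U`. -/
structure Inst (D : Schema) (U : Type) : Type where
  rel : ∀ r : D.Rel, Set (Fin (D.arity r) → U)
  finite : ∀ r, (rel r).Finite

/-- The active domain of an instance. -/
def Inst.adom {D : Schema} {U : Type} (I : Inst D U) : Set U :=
  { u | ∃ (r : D.Rel) (t : Fin (D.arity r) → U), t ∈ I.rel r ∧ ∃ j, t j = u }

/-- The schema `D` together with a primed copy of every relation symbol. -/
def Schema.double (D : Schema) : Schema where
  Rel := D.Rel ⊕ D.Rel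
  relFin := inferInstance
  arity := Sum.elim D.arity D.arity

/-- The disjunctive join `I ⊕ J`: unprimed symbols are interpreted as in `I`,
primed symbols as in `J`. -/
def Inst.oplus {D : Schema} {U : Type} (I J : Inst D U) : Inst D.double U where
  rel := fun r => match r with
    | .inl r₀ => I.rel r₀
    | .inr r₀ => J.rel r₀
  finite := fun r => by
    cases r with
    | inl r₀ => exact I.finite r₀
    | inr r₀ => exact J.finite r₀

/-- Image of an instance under a map of domains. -/
def Inst.map {D : Schema} {C U : Type} (f : C → U) (I : Inst D C) : Inst D U where
  rel := fun r => (fun t => f ∘ t) '' I.rel r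
  finite := fun r => (I.finite r).image _

/-! ### First-order formulas -/

/-- Terms: variables (natural numbers) or constants from `C`. -/
abbrev Term (C : Type) := ℕ ⊕ C

def Term.varsF {C : Type} : Term C → Finset ℕ
  | .inl x => {x}
  | .inr _ => ∅

def Term.constsS {C : Type} : Term C → Set C
  | .inl _ => ∅
  | .inr c => {c}

def Term.val {C U : Type} (cst : C → U) (σ : ℕ → U) : Term C → U
  | .inl x => σ x
  | .inr c => cst c

/-- First-order formulas over schema `D`, with equality, constants from `C`
and no function symbols. -/
inductive FO (D : Schema) (C : Type) : Type where
  | eq : Term C → Term C → FO D C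
  | rel : (r : D.Rel) → (Fin (D.arity r) → Term C) → FO D C
  | not : FO D C → FO D C
  | imp : FO D C → FO D C → FO D C
  | all : ℕ → FO D C → FO D C

namespace FO

variable {D : Schema} {C : Type}

/-- Free variables. -/
def free : FO D C → Finset ℕ
  | .eq t₁ t₂ => t₁.varsF ∪ t₂.varsF
  | .rel _ ts => Finset.univ.biUnion fun j => (ts j).varsF
  | .not φ => φ.free
  | .imp φ ψ => φ.free ∪ ψ.free
  | .all x φ => φ.free.erase x

/-- All variables. -/
def vars : FO D C → Finset ℕ
  | .eq t₁ t₂ => t₁.varsF ∪ t₂.varsF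
  | .rel _ ts => Finset.univ.biUnion fun j => (ts j).varsF
  | .not φ => φ.vars
  | .imp φ ψ => φ.vars ∪ ψ.vars
  | .all x φ => insert x φ.vars

/-- Constants mentioned in a formula. -/
def consts : FO D C → Set C
  | .eq t₁ t₂ => t₁.constsS ∪ t₂.constsS
  | .rel _ ts => ⋃ j, (ts j).constsS
  | .not φ => φ.consts
  | .imp φ ψ => φ.consts ∪ ψ.consts
  | .all _ φ => φ.consts

/-- The formula mentions only relation symbols from `R`. -/
def UsesOnly (R : Set D.Rel) : FO D C → Prop
  | .eq _ _ => True
  | .rel r _ => r ∈ R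
  | .not φ => φ.UsesOnly R
  | .imp φ ψ => φ.UsesOnly R ∧ ψ.UsesOnly R
  | .all _ φ => φ.UsesOnly R

/-- Satisfaction of FO-formulas, with active-domain quantification. -/
def sat {U : Type} (cst : C → U) (I : Inst D U) : (ℕ → U) → FO D C → Prop
  | σ, .eq t₁ t₂ => t₁.val cst σ = t₂.val cst σ
  | σ, .rel r ts => (fun j => (ts j).val cst σ) ∈ I.rel r
  | σ, .not φ => ¬ sat cst I σ φ
  | σ, .imp φ ψ => sat cst I σ φ → sat cst I σ ψ
  | σ, .all x φ => ∀ u ∈ I.adom, sat cst I (Function.update σ x u) φ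

end FO

/-! ### Agents and AC-MAS -/

/-- The signature of an agent: a finite set of action types with parameter counts. -/
structure AgentSig : Type 1 where
  Act : Type
  [actFin : Fintype Act]
  np : Act → ℕ

attribute [instance] AgentSig.actFin

/-- A ground action: an action type together with ground parameters. -/
def GAct (g : AgentSig) (U : Type) : Type := Σ a : g.Act, Fin (g.np a) → U

/-- Renaming of ground-action parameters. -/
def GAct.map {g : AgentSig} {U U' : Type} (f : U → U') : GAct g U → GAct g U'
  | ⟨a, u⟩ => ⟨a, fun j => f (u j)⟩

/-- An agent: local states structured as database instances, and a protocol. -/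
structure Agent (D : Schema) (g : AgentSig) (U : Type) : Type where
  L : Set (Inst D U)
  Pr : Inst D U → Set (GAct g U)

/-- A global state: one local database instance per agent `0, …, n`
(agent `0` is the environment). -/
abbrev GState (D : Schema) (n : ℕ) (U : Type) := Fin (n+1) → Inst D U

/-- A joint (global) ground action. -/
abbrev JAct {n : ℕ} (sig : Fin (n+1) → AgentSig) (U : Type) : Type := ∀ i, GAct (sig i) U

def JAct.map {n : ℕ} {sig : Fin (n+1) → AgentSig} {U U' : Type} (f : U → U')
    (a : JAct sig U) : JAct sig U' := fun i => (a i).map f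

/-- The set of individuals occurring as parameters of a joint ground action. -/
def actElems {n : ℕ} {sig : Fin (n+1) → AgentSig} {U : Type} (a : JAct sig U) : Set U :=
  { u | ∃ (i : Fin (n+1)) (j : Fin ((sig i).np (a i).1)), (a i).2 j = u }

/-- Active domain of a family of instances (e.g. a global state). -/
def adomF {D : Schema} {X U : Type} (s : X → Inst D U) : Set U := ⋃ i, (s i).adom

/-- The global instance `D_s` associated with a global state. -/
def gInst {D : Schema} {n : ℕ} {U : Type} (s : GState D n U) : Inst D U where
  rel := fun r => ⋃ i, (s i).rel r
  finite := fun r => Set.finite_iUnion fun i => (s i).finite r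

/-- Componentwise disjunctive join of two global states. -/
def oplusG {D : Schema} {n : ℕ} {U : Type} (s t : GState D n U) : GState D.double n U :=
  fun i => (s i).oplus (t i)

/-- An artifact-centric multi-agent system. -/
structure ACMAS (D : Schema) {n : ℕ} (sig : Fin (n+1) → AgentSig) {U : Type}
    (Ag : ∀ i, Agent D (sig i) U) : Type where
  /-- set of (reachable) global states -/
  S : Set (GState D n U)
  /-- initial global state -/
  s0 : GState D n U
  s0_mem : s0 ∈ S
  states_local : ∀ s ∈ S, ∀ i, s i ∈ (Ag i).L
  /-- global transition function -/
  τ : GState D n U → JAct sig U → Set (GState D n U)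
  /-- `τ` is defined only on protocol-enabled joint actions -/
  tau_enabled : ∀ s a, (τ s a).Nonempty → ∀ i, a i ∈ (Ag i).Pr (s i)
  tau_closed : ∀ s ∈ S, ∀ a, τ s a ⊆ S

namespace ACMAS

variable {D : Schema} {n : ℕ} {sig : Fin (n+1) → AgentSig} {U : Type}
  {Ag : ∀ i, Agent D (sig i) U}

/-- The transition relation `s → t`. -/
def Tr (M : ACMAS D sig Ag) (s t : GState D n U) : Prop := ∃ a, t ∈ M.τ s a

/-- Epistemic indistinguishability for agent `i`. -/
def Epi (M : ACMAS D sig Ag) (i : Fin (n+1)) (s t : GState D n U) : Prop :=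
  s ∈ M.S ∧ t ∈ M.S ∧ s i = t i

/-- Union of the epistemic relations of agents `1, …, n`. -/
def EpiAny (M : ACMAS D sig Ag) (s t : GState D n U) : Prop :=
  ∃ i : Fin n, M.Epi i.succ s t

/-- The standard assumptions: the transition relation is serial and `S` is
exactly the set of states reachable from `s0`. -/
def Std (M : ACMAS D sig Ag) : Prop :=
  (∀ s ∈ M.S, ∃ t, M.Tr s t) ∧ M.S = { s | Relation.ReflTransGen M.Tr M.s0 s }

/-- An (infinite) run. -/
def IsRun (M : ACMAS D sig Ag) (r : ℕ → GState D n U) : Prop :=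
  (∀ k, r k ∈ M.S) ∧ ∀ k, M.Tr (r k) (r (k+1))

/-- A temporal-epistemic run. -/
def IsTERun (M : ACMAS D sig Ag) (r : ℕ → GState D n U) : Prop :=
  (∀ k, r k ∈ M.S) ∧ ∀ k, M.Tr (r k) (r (k+1)) ∨ M.EpiAny (r k) (r (k+1))

end ACMAS

/-! ### Isomorphisms and equivalent assignments -/

/-- `ι` is a witness for the isomorphism of the families `s` and `s'`:
a constant-preserving bijection between the active domains extended with the
constants, preserving all relations componentwise. -/
def IsWitness {D : Schema} {X C U U' : Type} (cst : C → U) (cst' : C → U')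
    (ι : U → U') (s : X → Inst D U) (s' : X → Inst D U') : Prop :=
  Set.BijOn ι (adomF s ∪ Set.range cst) (adomF s' ∪ Set.range cst') ∧
  (∀ c, ι (cst c) = cst' c) ∧
  ∀ (i : X) (r : D.Rel) (t : Fin (D.arity r) → U),
    (∀ j, t j ∈ adomF s ∪ Set.range cst) →
    (t ∈ (s i).rel r ↔ (fun j => ι (t j)) ∈ (s' i).rel r)

/-- Isomorphism of families of instances (in particular global states). -/
def Iso {D : Schema} {X C U U' : Type} (cst : C → U) (cst' : C → U')
    (s : X → Inst D U) (s' : X → Inst D U') : Prop :=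
  ∃ ι, IsWitness cst cst' ι s s'

/-- Equivalent assignments for a set `V` of variables w.r.t. `s` and `s'`. -/
def EqAssign {D : Schema} {n : ℕ} {C U U' : Type} (cst : C → U) (cst' : C → U')
    (V : Set ℕ) (σ : ℕ → U) (σ' : ℕ → U')
    (s : GState D n U) (s' : GState D n U') : Prop :=
  ∃ γ : U → U',
    Set.BijOn γ (adomF s ∪ Set.range cst ∪ σ '' V)
      (adomF s' ∪ Set.range cst' ∪ σ' '' V) ∧
    IsWitness cst cst' γ s s' ∧
    ∀ x ∈ V, σ' x = γ (σ x)

/-! ### Simulations and bisimulations -/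

section Bisim

variable {D : Schema} {n : ℕ} {sig sig' : Fin (n+1) → AgentSig} {C U U' : Type}
  {Ag : ∀ i, Agent D (sig i) U} {Ag' : ∀ i, Agent D (sig' i) U'}

/-- Simulation between two AC-MAS. -/
def IsSim (cst : C → U) (cst' : C → U')
    (M : ACMAS D sig Ag) (M' : ACMAS D sig' Ag')
    (R : GState D n U → GState D n U' → Prop) : Prop :=
  ∀ s s', R s s' →
    s ∈ M.S ∧ s' ∈ M'.S ∧ Iso cst cst' s s' ∧
    ∀ t, M.Tr s t → ∃ t', M'.Tr s' t' ∧ R t t'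

/-- Bisimulation. -/
def IsBisim (cst : C → U) (cst' : C → U')
    (M : ACMAS D sig Ag) (M' : ACMAS D sig' Ag')
    (R : GState D n U → GState D n U' → Prop) : Prop :=
  IsSim cst cst' M M' R ∧ IsSim cst' cst M' M (fun s' s => R s s')

/-- Bisimilarity of states. -/
def Bisimilar (cst : C → U) (cst' : C → U')
    (M : ACMAS D sig Ag) (M' : ACMAS D sig' Ag')
    (s : GState D n U) (s' : GState D n U') : Prop :=
  ∃ R, IsBisim cst cst' M M' R ∧ R s s'

/-- `P ≈ P'`: the two systems are bisimilar. -/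
def BisimSys (cst : C → U) (cst' : C → U')
    (M : ACMAS D sig Ag) (M' : ACMAS D sig' Ag') : Prop :=
  Bisimilar cst cst' M M' M.s0 M'.s0

/-- ⊕-simulation. -/
def IsOSim (cst : C → U) (cst' : C → U')
    (M : ACMAS D sig Ag) (M' : ACMAS D sig' Ag')
    (R : GState D n U → GState D n U' → Prop) : Prop :=
  ∀ s s', R s s' →
    s ∈ M.S ∧ s' ∈ M'.S ∧ Iso cst cst' s s' ∧
    (∀ t, M.Tr s t → ∃ t', M'.Tr s' t' ∧
        Iso cst cst' (oplusG s t) (oplusG s' t') ∧ R t t') ∧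
    (∀ (t : GState D n U) (i : Fin n), M.Epi i.succ s t →
        ∃ t', M'.Epi i.succ s' t' ∧
          Iso cst cst' (oplusG s t) (oplusG s' t') ∧ R t t')

/-- ⊕-bisimulation. -/
def IsOBisim (cst : C → U) (cst' : C → U')
    (M : ACMAS D sig Ag) (M' : ACMAS D sig' Ag')
    (R : GState D n U → GState D n U' → Prop) : Prop :=
  IsOSim cst cst' M M' R ∧ IsOSim cst' cst M' M (fun s' s => R s s')

/-- ⊕-bisimilarity of states. -/
def OBisimilar (cst : C → U) (cst' : C → U')
    (M : ACMAS D sig Ag) (M' : ACMAS D sig' Ag')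
    (s : GState D n U) (s' : GState D n U') : Prop :=
  ∃ R, IsOBisim cst cst' M M' R ∧ R s s'

/-- The two systems are ⊕-bisimilar. -/
def OBisimSys (cst : C → U) (cst' : C → U')
    (M : ACMAS D sig Ag) (M' : ACMAS D sig' Ag') : Prop :=
  OBisimilar cst cst' M M' M.s0 M'.s0

end Bisim

/-! ### Uniformity and boundedness -/

section Uniform

variable {D : Schema} {n : ℕ} {sig : Fin (n+1) → AgentSig} {C U : Type}
  {Ag : ∀ i, Agent D (sig i) U}

/-- Temporal condition (1) of uniformity. -/
def UniformT (cst : C → U) (M : ACMAS D sig Ag) : Prop :=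
  ∀ s ∈ M.S, ∀ t ∈ M.S, ∀ s' ∈ M.S, ∀ (t' : GState D n U) (a : JAct sig U),
    t ∈ M.τ s a →
    ∀ ι : U → U, IsWitness cst cst ι (oplusG s t) (oplusG s' t') →
    ∀ ι' : U → U,
      (∀ u ∈ adomF (oplusG s t) ∪ Set.range cst, ι' u = ι u) →
      Set.InjOn ι' (adomF (oplusG s t) ∪ Set.range cst ∪ actElems a) →
      (∀ c, ι' (cst c) = cst c) →
      t' ∈ M.τ s' (JAct.map ι' a)

/-- Epistemic condition (2) of uniformity. -/
def UniformE (cst : C → U) (M : ACMAS D sig Ag) : Prop :=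
  ∀ s ∈ M.S, ∀ t ∈ M.S, ∀ s' ∈ M.S, ∀ (t' : GState D n U) (i : Fin n),
    M.Epi i.succ s t → Iso cst cst (oplusG s t) (oplusG s' t') →
    M.Epi i.succ s' t'

/-- Uniform AC-MAS. -/
def Uniform (cst : C → U) (M : ACMAS D sig Ag) : Prop :=
  UniformT cst M ∧ UniformE cst M

/-- `b`-bounded AC-MAS: no reachable state has more than `b` distinct elements
in its active domain. -/
def BBounded (M : ACMAS D sig Ag) (b : ℕ) : Prop :=
  ∀ s ∈ M.S, (adomF s).Finite ∧ (adomF s).ncard ≤ b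

end Uniform

/-- `N_Ag`: the sum over the agents of the maximal number of parameters of
their action types. -/
def NAg {n : ℕ} (sig : Fin (n+1) → AgentSig) : ℕ :=
  ∑ i, Finset.univ.sup (sig i).np

/-! ### Abstractions -/

section Abstraction

variable {D : Schema} {n : ℕ} {sig : Fin (n+1) → AgentSig} {C U U' : Type}
  {Ag : ∀ i, Agent D (sig i) U} {Ag' : ∀ i, Agent D (sig i) U'}

/-- `A'` is the abstract agent corresponding to `A`, over the domain `U'`. -/
def IsAbstractAgent {g : AgentSig} (cst : C → U) (cst' : C → U')
    (A : Agent D g U) (A' : Agent D g U') : Prop :=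
  ∀ (l' : Inst D U') (α' : GAct g U'), α' ∈ A'.Pr l' ↔
    ∃ l ∈ A.L, ∃ α ∈ A.Pr l, ∃ ι : U → U',
      IsWitness cst cst' ι (fun _ : PUnit => l) (fun _ : PUnit => l') ∧
      ∃ ι' : U → U',
        (∀ u ∈ l.adom ∪ Set.range cst, ι' u = ι u) ∧
        Set.InjOn ι' (l.adom ∪ Set.range cst ∪ Set.range α.2) ∧
        α' = α.map ι'

/-- `M'` is an abstraction of `M` (over the abstract agents `Ag'`). -/
def IsAbstraction (cst : C → U) (cst' : C → U')
    (M : ACMAS D sig Ag) (M' : ACMAS D sig Ag') : Prop :=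
  (∀ i, IsAbstractAgent cst cst' (Ag i) (Ag' i)) ∧
  Iso cst' cst M'.s0 M.s0 ∧
  ∀ (s' t' : GState D n U') (a' : JAct sig U'),
    t' ∈ M'.τ s' a' ↔
      ∃ s ∈ M.S, ∃ t ∈ M.S, ∃ a : JAct sig U, t ∈ M.τ s a ∧
        ∃ ι : U → U', IsWitness cst cst' ι s s' ∧ IsWitness cst cst' ι t t' ∧
          ∃ ι' : U → U',
            (∀ u ∈ adomF s ∪ adomF t ∪ Set.range cst, ι' u = ι u) ∧
            Set.InjOn ι' (adomF s ∪ adomF t ∪ Set.range cst ∪ actElems a) ∧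
            a' = JAct.map ι' a

/-- `M'` is a ⊕-abstraction of `M` (over the abstract agents `Ag'`).
The requirement `s0' = s0` is rendered, across the two interpretation
domains, as: the initial states are isomorphic and `adom(s0) ⊆ C`. -/
def IsOAbstraction (cst : C → U) (cst' : C → U')
    (M : ACMAS D sig Ag) (M' : ACMAS D sig Ag') : Prop :=
  (∀ i, IsAbstractAgent cst cst' (Ag i) (Ag' i)) ∧
  (Iso cst cst' M.s0 M'.s0 ∧ adomF M.s0 ⊆ Set.range cst) ∧
  ∀ (s' t' : GState D n U') (a' : JAct sig U'),
    t' ∈ M'.τ s' a' ↔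
      ∃ s ∈ M.S, ∃ t ∈ M.S, ∃ a : JAct sig U, t ∈ M.τ s a ∧
        ∃ ι : U → U',
          IsWitness cst cst' ι (oplusG s t) (oplusG s' t') ∧
          ∃ ι' : U → U',
            (∀ u ∈ adomF (oplusG s t) ∪ Set.range cst, ι' u = ι u) ∧
            Set.InjOn ι' (adomF (oplusG s t) ∪ Set.range cst ∪ actElems a) ∧
            a' = JAct.map ι' a

end Abstraction

/-! ### Temporal-epistemic specification languages -/

/-- Sentence-atomic FO-CTL formulas. -/
inductive SAFOCTL (D : Schema) (C : Type) : Type where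
  | atom : (ψ : FO D C) → ψ.free = ∅ → SAFOCTL D C
  | not : SAFOCTL D C → SAFOCTL D C
  | imp : SAFOCTL D C → SAFOCTL D C → SAFOCTL D C
  | ax : SAFOCTL D C → SAFOCTL D C
  | au : SAFOCTL D C → SAFOCTL D C → SAFOCTL D C
  | eu : SAFOCTL D C → SAFOCTL D C → SAFOCTL D C

/-- Satisfaction of SA-FO-CTL formulas at a global state. -/
def SAFOCTL.sat {D : Schema} {C : Type} {n : ℕ} {sig : Fin (n+1) → AgentSig}
    {U : Type} {Ag : ∀ i, Agent D (sig i) U}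
    (cst : C → U) (M : ACMAS D sig Ag) :
    SAFOCTL D C → GState D n U → Prop
  | .atom ψ _, s => ∀ σ, FO.sat cst (gInst s) σ ψ
  | .not φ, s => ¬ SAFOCTL.sat cst M φ s
  | .imp φ ψ, s => SAFOCTL.sat cst M φ s → SAFOCTL.sat cst M ψ s
  | .ax φ, s => ∀ r, M.IsRun r → r 0 = s → SAFOCTL.sat cst M φ (r 1)
  | .au φ ψ, s => ∀ r, M.IsRun r → r 0 = s →
      ∃ k, SAFOCTL.sat cst M ψ (r k) ∧ ∀ j < k, SAFOCTL.sat cst M φ (r j)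
  | .eu φ ψ, s => ∃ r, M.IsRun r ∧ r 0 = s ∧
      ∃ k, SAFOCTL.sat cst M ψ (r k) ∧ ∀ j < k, SAFOCTL.sat cst M φ (r j)

/-- `P ⊨ φ` for SA-FO-CTL. -/
def SAFOCTL.satM {D : Schema} {C : Type} {n : ℕ} {sig : Fin (n+1) → AgentSig}
    {U : Type} {Ag : ∀ i, Agent D (sig i) U}
    (cst : C → U) (M : ACMAS D sig Ag) (φ : SAFOCTL D C) : Prop :=
  SAFOCTL.sat cst M φ M.s0

/-- FO-CTLK formulas, with epistemic operators for agents `1, …, n` and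
common knowledge. -/
inductive FOCTLK (D : Schema) (C : Type) (n : ℕ) : Type where
  | atom : FO D C → FOCTLK D C n
  | not : FOCTLK D C n → FOCTLK D C n
  | imp : FOCTLK D C n → FOCTLK D C n → FOCTLK D C n
  | all : ℕ → FOCTLK D C n → FOCTLK D C n
  | ax : FOCTLK D C n → FOCTLK D C n
  | au : FOCTLK D C n → FOCTLK D C n → FOCTLK D C n
  | eu : FOCTLK D C n → FOCTLK D C n → FOCTLK D C n
  | know : Fin n → FOCTLK D C n → FOCTLK D C n
  | ck : FOCTLK D C n → FOCTLK D C n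

namespace FOCTLK

variable {D : Schema} {C : Type} {n : ℕ}

def free : FOCTLK D C n → Finset ℕ
  | .atom ψ => ψ.free
  | .not φ => φ.free
  | .imp φ ψ => φ.free ∪ ψ.free
  | .all x φ => φ.free.erase x
  | .ax φ => φ.free
  | .au φ ψ => φ.free ∪ ψ.free
  | .eu φ ψ => φ.free ∪ ψ.free
  | .know _ φ => φ.free
  | .ck φ => φ.free

def vars : FOCTLK D C n → Finset ℕ
  | .atom ψ => ψ.vars
  | .not φ => φ.vars
  | .imp φ ψ => φ.vars ∪ ψ.vars
  | .all x φ => insert x φ.vars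
  | .ax φ => φ.vars
  | .au φ ψ => φ.vars ∪ ψ.vars
  | .eu φ ψ => φ.vars ∪ ψ.vars
  | .know _ φ => φ.vars
  | .ck φ => φ.vars

/-- Satisfaction `(P, s, σ) ⊨ φ` of FO-CTLK formulas. -/
def sat {sig : Fin (n+1) → AgentSig} {U : Type} {Ag : ∀ i, Agent D (sig i) U}
    (cst : C → U) (M : ACMAS D sig Ag) :
    FOCTLK D C n → GState D n U → (ℕ → U) → Prop
  | .atom ψ, s, σ => FO.sat cst (gInst s) σ ψ
  | .not φ, s, σ => ¬ sat cst M φ s σ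
  | .imp φ ψ, s, σ => sat cst M φ s σ → sat cst M ψ s σ
  | .all x φ, s, σ => ∀ u ∈ adomF s, sat cst M φ s (Function.update σ x u)
  | .ax φ, s, σ => ∀ r, M.IsRun r → r 0 = s → sat cst M φ (r 1) σ
  | .au φ ψ, s, σ => ∀ r, M.IsRun r → r 0 = s →
      ∃ k, sat cst M ψ (r k) σ ∧ ∀ j < k, sat cst M φ (r j) σ
  | .eu φ ψ, s, σ => ∃ r, M.IsRun r ∧ r 0 = s ∧
      ∃ k, sat cst M ψ (r k) σ ∧ ∀ j < k, sat cst M φ (r j) σ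
  | .know i φ, s, σ => ∀ t, M.Epi i.succ s t → sat cst M φ t σ
  | .ck φ, s, σ => ∀ t, Relation.TransGen M.EpiAny s t → sat cst M φ t σ

/-- `P ⊨ φ` for FO-CTLK: satisfaction at the initial state under every
assignment. -/
def satM {sig : Fin (n+1) → AgentSig} {U : Type} {Ag : ∀ i, Agent D (sig i) U}
    (cst : C → U) (M : ACMAS D sig Ag) (φ : FOCTLK D C n) : Prop :=
  ∀ σ : ℕ → U, sat cst M φ M.s0 σ

end FOCTLK

/-- FO-ECTLK: the existential fragment. -/
inductive FOECTLK (D : Schema) (C : Type) (n : ℕ) : Type where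
  | atom : FO D C → FOECTLK D C n
  | and : FOECTLK D C n → FOECTLK D C n → FOECTLK D C n
  | or : FOECTLK D C n → FOECTLK D C n → FOECTLK D C n
  | all : ℕ → FOECTLK D C n → FOECTLK D C n
  | ex : ℕ → FOECTLK D C n → FOECTLK D C n
  | enext : FOECTLK D C n → FOECTLK D C n
  | eu : FOECTLK D C n → FOECTLK D C n → FOECTLK D C n
  | dknow : Fin n → FOECTLK D C n → FOECTLK D C n
  | dck : FOECTLK D C n → FOECTLK D C n

/-- Satisfaction of FO-ECTLK formulas. -/
def FOECTLK.sat {D : Schema} {C : Type} {n : ℕ} {sig : Fin (n+1) → AgentSig}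
    {U : Type} {Ag : ∀ i, Agent D (sig i) U}
    (cst : C → U) (M : ACMAS D sig Ag) :
    FOECTLK D C n → GState D n U → (ℕ → U) → Prop
  | .atom ψ, s, σ => FO.sat cst (gInst s) σ ψ
  | .and φ ψ, s, σ => FOECTLK.sat cst M φ s σ ∧ FOECTLK.sat cst M ψ s σ
  | .or φ ψ, s, σ => FOECTLK.sat cst M φ s σ ∨ FOECTLK.sat cst M ψ s σ
  | .all x φ, s, σ => ∀ u ∈ adomF s, FOECTLK.sat cst M φ s (Function.update σ x u)
  | .ex x φ, s, σ => ∃ u ∈ adomF s, FOECTLK.sat cst M φ s (Function.update σ x u)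
  | .enext φ, s, σ => ∃ r, M.IsRun r ∧ r 0 = s ∧ FOECTLK.sat cst M φ (r 1) σ
  | .eu φ ψ, s, σ => ∃ r, M.IsRun r ∧ r 0 = s ∧
      ∃ k, FOECTLK.sat cst M ψ (r k) σ ∧ ∀ j < k, FOECTLK.sat cst M φ (r j) σ
  | .dknow i φ, s, σ => ∃ t, M.Epi i.succ s t ∧ FOECTLK.sat cst M φ t σ
  | .dck φ, s, σ => ∃ t, Relation.TransGen M.EpiAny s t ∧ FOECTLK.sat cst M φ t σ

/-- `P ⊨ φ` for FO-ECTLK. -/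
def FOECTLK.satM {D : Schema} {C : Type} {n : ℕ} {sig : Fin (n+1) → AgentSig}
    {U : Type} {Ag : ∀ i, Agent D (sig i) U}
    (cst : C → U) (M : ACMAS D sig Ag) (φ : FOECTLK D C n) : Prop :=
  ∀ σ : ℕ → U, FOECTLK.sat cst M φ M.s0 σ

/-- `Mb` is the `b`-restriction of `M`. -/
def IsBRestriction {D : Schema} {n : ℕ} {sig : Fin (n+1) → AgentSig} {U : Type}
    {Ag : ∀ i, Agent D (sig i) U} (Mb M : ACMAS D sig Ag) (b : ℕ) : Prop :=
  Mb.s0 = M.s0 ∧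
  Mb.S = { s ∈ M.S | (adomF s).Finite ∧ (adomF s).ncard ≤ b } ∧
  ∀ s a, Mb.τ s a = { t ∈ M.τ s a | s ∈ Mb.S ∧ t ∈ Mb.S }

/-! ### Artifact-centric programs -/

/-- A declarative artifact-centric program. -/
structure ACProgram (D : Schema) (C : Type) {n : ℕ} (sig : Fin (n+1) → AgentSig) where
  /-- local database schemas, as sets of relation symbols -/
  locRel : Fin (n+1) → Set D.Rel
  locDisj : ∀ i j, i ≠ j → Disjoint (locRel i) (locRel j)
  /-- initial local states; their values are constants -/
  l0 : ∀ _ : Fin (n+1), Inst D C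
  l0_loc : ∀ i r, r ∉ locRel i → (l0 i).rel r = ∅
  /-- preconditions: FO-formulas over the local schema whose free variables
  are among the action parameters -/
  pre : ∀ i, (sig i).Act → FO D C
  /-- postconditions: FO-formulas over the global schema and its primed copy -/
  post : ∀ i, (sig i).Act → FO D.double C
  pre_free : ∀ i a, ↑(pre i a).free ⊆ { x : ℕ | x < (sig i).np a }
  post_free : ∀ i a, ↑(post i a).free ⊆ { x : ℕ | x < (sig i).np a }
  pre_loc : ∀ i a, (pre i a).UsesOnly (locRel i)

namespace ACProgram

variable {D : Schema} {C : Type} {n : ℕ} {sig : Fin (n+1) → AgentSig}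

/-- The constants mentioned in the program. -/
def progConsts (P : ACProgram D C sig) : Set C :=
  (⋃ i, (P.l0 i).adom) ∪
  ⋃ i, ⋃ a : (sig i).Act, ((P.pre i a).consts ∪ (P.post i a).consts)

/-- Ground values of the postcondition parameters of a joint ground action. -/
def postElems (P : ACProgram D C sig) {U : Type} (a : JAct sig U) : Set U :=
  { u | ∃ (i : Fin (n+1)) (j : Fin ((sig i).np (a i).1)),
      (j : ℕ) ∈ (P.post i (a i).1).free ∧ (a i).2 j = u }

/-- The agent induced by the program for index `i`. -/
def InducedAgent {U : Type} (cst : C → U) (P : ACProgram D C sig) (i : Fin (n+1))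
    (A : Agent D (sig i) U) : Prop :=
  A.L = { l : Inst D U | ∀ r, r ∉ P.locRel i → l.rel r = ∅ } ∧
  ∀ (l : Inst D U) (α : GAct (sig i) U), α ∈ A.Pr l ↔
    ∀ σ : ℕ → U, (∀ j : Fin ((sig i).np α.1), σ (j : ℕ) = α.2 j) →
      FO.sat cst l σ (P.pre i α.1)

/-- The transitions induced by the program. -/
def InducedTrans {U : Type} (cst : C → U) (P : ACProgram D C sig)
    (s t : GState D n U) (a : JAct sig U) : Prop :=
  (∀ i, ∀ σ : ℕ → U, (∀ j : Fin ((sig i).np (a i).1), σ (j : ℕ) = (a i).2 j) →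
      FO.sat cst (s i) σ (P.pre i (a i).1)) ∧
  adomF t ⊆ adomF s ∪ P.postElems a ∪ cst '' (⋃ i, (P.post i (a i).1).consts) ∧
  (∀ i, ∀ σ : ℕ → U, (∀ j : Fin ((sig i).np (a i).1), σ (j : ℕ) = (a i).2 j) →
      FO.sat cst ((gInst s).oplus (gInst t)) σ (P.post i (a i).1))

/-- `M` is the AC-MAS induced by the program `P` (the transition relation is
assumed to be serial). -/
def InducedACMAS {U : Type} (cst : C → U) (P : ACProgram D C sig)
    (Ag : ∀ i, Agent D (sig i) U) (M : ACMAS D sig Ag) : Prop :=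
  (∀ i, P.InducedAgent cst i (Ag i)) ∧
  M.s0 = (fun i => (P.l0 i).map cst) ∧
  (∀ s t a, t ∈ M.τ s a ↔ P.InducedTrans cst s t a) ∧
  M.Std

end ACProgram

/-! ### Auxiliary lemmas for Statement 2 -/

section Aux

variable {D : Schema} {n : ℕ} {C U U' : Type}

lemma adom_gInst (s : GState D n U) : (gInst s).adom = adomF s := by
  ext u
  constructor
  · rintro ⟨r, t, ht, j, rfl⟩
    rcases Set.mem_iUnion.1 ht with ⟨i, hi⟩
    exact Set.mem_iUnion.2 ⟨i, r, t, hi, j, rfl⟩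
  · intro h
    rcases Set.mem_iUnion.1 h with ⟨i, r, t, hi, j, rfl⟩
    exact ⟨r, t, Set.mem_iUnion.2 ⟨i, hi⟩, j, rfl⟩

lemma witness_adom_maps {cst : C → U} {cst' : C → U'} {ι : U → U'}
    {s : GState D n U} {s' : GState D n U'}
    (hw : IsWitness cst cst' ι s s') :
    ∀ u ∈ adomF s, ι u ∈ adomF s' := by
  intro u hu
  rcases Set.mem_iUnion.1 hu with ⟨i, r, t, hti, j, rfl⟩
  have hdom : ∀ j', t j' ∈ adomF s ∪ Set.range cst := fun j' =>
    Or.inl (Set.mem_iUnion.2 ⟨i, r, t, hti, j', rfl⟩)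
  have := (hw.2.2 i r t hdom).1 hti
  exact Set.mem_iUnion.2 ⟨i, r, fun j' => ι (t j'), this, j, rfl⟩

lemma witness_adom_surj {cst : C → U} {cst' : C → U'} {ι : U → U'}
    {s : GState D n U} {s' : GState D n U'}
    (hw : IsWitness cst cst' ι s s') :
    ∀ u' ∈ adomF s', ∃ u ∈ adomF s, ι u = u' := by
  intro u' hu'
  rcases Set.mem_iUnion.1 hu' with ⟨i, r, t', ht'i, j, rfl⟩
  have hdom' : ∀ j', t' j' ∈ adomF s' ∪ Set.range cst' := fun j' =>
    Or.inl (Set.mem_iUnion.2 ⟨i, r, t', ht'i, j', rfl⟩)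
  have hch : ∀ j', ∃ u, u ∈ adomF s ∪ Set.range cst ∧ ι u = t' j' := by
    intro j'
    rcases hw.1.surjOn (hdom' j') with ⟨u, hu, hιu⟩
    exact ⟨u, hu, hιu⟩
  choose t ht hιt using hch
  have hrel : t ∈ (s i).rel r := by
    have := hw.2.2 i r t ht
    rw [this]
    have : (fun j' => ι (t j')) = t' := funext hιt
    rw [this]; exact ht'i
  refine ⟨t j, Set.mem_iUnion.2 ⟨i, r, t, hrel, j, rfl⟩, hιt j⟩

lemma term_val_iso {cst : C → U} {cst' : C → U'} {ι : U → U'}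
    {s : GState D n U} {s' : GState D n U'}
    (hw : IsWitness cst cst' ι s s')
    (t : Term C) (σ : ℕ → U) (σ' : ℕ → U')
    (h : ∀ x ∈ t.varsF, σ x ∈ adomF s ∪ Set.range cst ∧ σ' x = ι (σ x)) :
    t.val cst σ ∈ adomF s ∪ Set.range cst ∧ t.val cst' σ' = ι (t.val cst σ) := by
  cases t with
  | inl x => exact h x (by simp [Term.varsF])
  | inr c => exact ⟨Or.inr ⟨c, rfl⟩, (hw.2.1 c).symm⟩

lemma fo_iso {cst : C → U} {cst' : C → U'} {ι : U → U'}
    {s : GState D n U} {s' : GState D n U'}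
    (hw : IsWitness cst cst' ι s s')
    (ψ : FO D C) :
    ∀ (σ : ℕ → U) (σ' : ℕ → U'),
      (∀ x ∈ ψ.free, σ x ∈ adomF s ∪ Set.range cst ∧ σ' x = ι (σ x)) →
      (FO.sat cst (gInst s) σ ψ ↔ FO.sat cst' (gInst s') σ' ψ) := by
  induction ψ with
  | eq t₁ t₂ =>
    intro σ σ' h
    have h1 := term_val_iso hw t₁ σ σ' fun x hx =>
      h x (Finset.mem_union_left _ hx)
    have h2 := term_val_iso hw t₂ σ σ' fun x hx =>
      h x (Finset.mem_union_right _ hx)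
    simp only [FO.sat, h1.2, h2.2]
    constructor
    · intro he; rw [he]
    · intro he; exact hw.1.injOn h1.1 h2.1 he
  | rel r ts =>
    intro σ σ' h
    have hv : ∀ j, (ts j).val cst σ ∈ adomF s ∪ Set.range cst ∧
        (ts j).val cst' σ' = ι ((ts j).val cst σ) := by
      intro j
      exact term_val_iso hw (ts j) σ σ' fun x hx =>
        h x (Finset.mem_biUnion.2 ⟨j, Finset.mem_univ j, hx⟩)
    have heq : (fun j => (ts j).val cst' σ') = fun j => ι ((ts j).val cst σ) :=
      funext fun j => (hv j).2
    simp only [FO.sat, heq]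
    constructor
    · intro hm
      rcases Set.mem_iUnion.1 hm with ⟨i, hi⟩
      exact Set.mem_iUnion.2 ⟨i, (hw.2.2 i r _ fun j => (hv j).1).1 hi⟩
    · intro hm
      rcases Set.mem_iUnion.1 hm with ⟨i, hi⟩
      exact Set.mem_iUnion.2 ⟨i, (hw.2.2 i r _ fun j => (hv j).1).2 hi⟩
  | not ψ ih =>
    intro σ σ' h
    simp only [FO.sat]
    exact not_congr (ih σ σ' h)
  | imp ψ₁ ψ₂ ih₁ ih₂ =>
    intro σ σ' h
    simp only [FO.sat]
    exact imp_congr (ih₁ σ σ' fun x hx => h x (Finset.mem_union_left _ hx))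
      (ih₂ σ σ' fun x hx => h x (Finset.mem_union_right _ hx))
  | all x ψ ih =>
    intro σ σ' h
    simp only [FO.sat, adom_gInst]
    constructor
    · intro hall u' hu'
      rcases witness_adom_surj hw u' hu' with ⟨u, hu, rfl⟩
      refine (ih _ _ ?_).1 (hall u hu)
      intro y hy
      by_cases hyx : y = x
      · subst hyx
        simp [Function.update_self, Or.inl hu]
      · have hy' : y ∈ (FO.all x ψ).free := Finset.mem_erase.2 ⟨hyx, hy⟩
        simpa [Function.update_of_ne hyx] using h y hy'
    · intro hall u hu
      refine (ih _ _ ?_).2 (hall (ι u) (witness_adom_maps hw u hu))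
      intro y hy
      by_cases hyx : y = x
      · subst hyx
        simp [Function.update_self, Or.inl hu]
      · have hy' : y ∈ (FO.all x ψ).free := Finset.mem_erase.2 ⟨hyx, hy⟩
        simpa [Function.update_of_ne hyx] using h y hy'

end Aux

section LiftRun

variable {D : Schema} {n : ℕ} {sig sig' : Fin (n+1) → AgentSig} {C U U' : Type}
  {Ag : ∀ i, Agent D (sig i) U} {Ag' : ∀ i, Agent D (sig' i) U'}

/-- A simulation lifts runs. -/
lemma lift_run {cst : C → U} {cst' : C → U'}
    {M : ACMAS D sig Ag} {M' : ACMAS D sig' Ag'}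
    {R : GState D n U → GState D n U' → Prop}
    (hsim : IsSim cst cst' M M' R)
    {s' : GState D n U'} {r : ℕ → GState D n U}
    (hr : M.IsRun r) (hR : R (r 0) s') :
    ∃ r', M'.IsRun r' ∧ r' 0 = s' ∧ ∀ k, R (r k) (r' k) := by
  classical
  have F : ∀ (k : ℕ) (t' : GState D n U'), R (r k) t' →
      ∃ u', M'.Tr t' u' ∧ R (r (k+1)) u' := by
    intro k t' h
    rcases (hsim _ _ h).2.2.2 (r (k+1)) (hr.2 k) with ⟨u', hu1, hu2⟩
    exact ⟨u', hu1, hu2⟩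
  let g : ∀ k : ℕ, {t' // R (r k) t'} := fun k =>
    Nat.rec ⟨s', hR⟩
      (fun k p => ⟨(F k p.1 p.2).choose, (F k p.1 p.2).choose_spec.2⟩) k
  refine ⟨fun k => (g k).1, ⟨?_, ?_⟩, rfl, fun k => (g k).2⟩
  · intro k; exact (hsim _ _ (g k).2).2.1
  · intro k
    exact (F k (g k).1 (g k).2).choose_spec.1

end LiftRun

section KeyLemma

variable {D : Schema} {n : ℕ} {sig sig' : Fin (n+1) → AgentSig} {C U U' : Type}
  {Ag : ∀ i, Agent D (sig i) U} {Ag' : ∀ i, Agent D (sig' i) U'}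

lemma bisim_sat {cst : C → U} {cst' : C → U'}
    {M : ACMAS D sig Ag} {M' : ACMAS D sig' Ag'}
    {R : GState D n U → GState D n U' → Prop}
    (hbis : IsBisim cst cst' M M' R) (φ : SAFOCTL D C) :
    ∀ s s', R s s' → (SAFOCTL.sat cst M φ s ↔ SAFOCTL.sat cst' M' φ s') := by
  induction φ with
  | atom ψ hψ =>
    intro s s' hR
    rcases (hbis.1 s s' hR).2.2.1 with ⟨ι, hw⟩
    rcases (hbis.2 s' s hR).2.2.1 with ⟨κ, hw'⟩
    simp only [SAFOCTL.sat]
    constructor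
    · intro h σ'
      exact (fo_iso hw ψ (κ ∘ σ') σ' (by simp [hψ])).1 (h _)
    · intro h σ
      exact (fo_iso hw ψ σ (ι ∘ σ) (by simp [hψ])).2 (h _)
  | not φ ih =>
    intro s s' hR
    simp only [SAFOCTL.sat]
    exact not_congr (ih s s' hR)
  | imp φ ψ ihφ ihψ =>
    intro s s' hR
    simp only [SAFOCTL.sat]
    exact imp_congr (ihφ s s' hR) (ihψ s s' hR)
  | ax φ ih =>
    intro s s' hR
    simp only [SAFOCTL.sat]
    constructor
    · intro h r' hr' h0'
      have hR' : (fun a b => R b a) (r' 0) s := by rw [h0']; exact hR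
      rcases lift_run hbis.2 hr' hR' with ⟨r, hr, h0, hRk⟩
      exact (ih _ _ (hRk 1)).1 (h r hr h0)
    · intro h r hr h0
      have hR' : R (r 0) s' := by rw [h0]; exact hR
      rcases lift_run hbis.1 hr hR' with ⟨r', hr', h0', hRk⟩
      exact (ih _ _ (hRk 1)).2 (h r' hr' h0')
  | au φ ψ ihφ ihψ =>
    intro s s' hR
    simp only [SAFOCTL.sat]
    constructor
    · intro h r' hr' h0'
      have hR' : (fun a b => R b a) (r' 0) s := by rw [h0']; exact hR
      rcases lift_run hbis.2 hr' hR' with ⟨r, hr, h0, hRk⟩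
      rcases h r hr h0 with ⟨k, hk, hj⟩
      exact ⟨k, (ihψ _ _ (hRk k)).1 hk, fun j hjk => (ihφ _ _ (hRk j)).1 (hj j hjk)⟩
    · intro h r hr h0
      have hR' : R (r 0) s' := by rw [h0]; exact hR
      rcases lift_run hbis.1 hr hR' with ⟨r', hr', h0', hRk⟩
      rcases h r' hr' h0' with ⟨k, hk, hj⟩
      exact ⟨k, (ihψ _ _ (hRk k)).2 hk, fun j hjk => (ihφ _ _ (hRk j)).2 (hj j hjk)⟩
  | eu φ ψ ihφ ihψ =>
    intro s s' hR
    simp only [SAFOCTL.sat]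
    constructor
    · rintro ⟨r, hr, h0, k, hk, hj⟩
      have hR' : R (r 0) s' := by rw [h0]; exact hR
      rcases lift_run hbis.1 hr hR' with ⟨r', hr', h0', hRk⟩
      exact ⟨r', hr', h0', k, (ihψ _ _ (hRk k)).1 hk,
        fun j hjk => (ihφ _ _ (hRk j)).1 (hj j hjk)⟩
    · rintro ⟨r', hr', h0', k, hk, hj⟩
      have hR' : (fun a b => R b a) (r' 0) s := by rw [h0']; exact hR
      rcases lift_run hbis.2 hr' hR' with ⟨r, hr, h0, hRk⟩
      exact ⟨r, hr, h0, k, (ihψ _ _ (hRk k)).2 hk,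
        fun j hjk => (ihφ _ _ (hRk j)).2 (hj j hjk)⟩

end KeyLemma

/-! ### STATEMENT 2 -/

theorem statement2
    {D : Schema} {C : Type} [Fintype C] {n : ℕ}
    {sig sig' : Fin (n+1) → AgentSig} {U U' : Type}
    (cst : C → U) (cst' : C → U')
    (hcst : Function.Injective cst) (hcst' : Function.Injective cst')
    {Ag : ∀ i, Agent D (sig i) U} {Ag' : ∀ i, Agent D (sig' i) U'}
    (M : ACMAS D sig Ag) (M' : ACMAS D sig' Ag')
    (hM : M.Std) (hM' : M'.Std)
    (hPP' : BisimSys cst cst' M M')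
    (s : GState D n U) (s' : GState D n U') (hs : s ∈ M.S) (hs' : s' ∈ M'.S)
    (hss' : Bisimilar cst cst' M M' s s')
    (φ : SAFOCTL D C) :
    SAFOCTL.sat cst M φ s ↔ SAFOCTL.sat cst' M' φ s' := by
  obtain ⟨R, hbis, hR⟩ := hss'
  exact bisim_sat hbis φ s s' hR
end

section
/- Let P be an AC-MAS that satisfies the temporal condition (1) of uniformity (if t ∈ τ(s, α⃗(u⃗)) and s⊕t ≃ s'⊕t' for some witness ι, then for every constant-preserving bijection ι' extending ι to u⃗ one has t' ∈ τ(s', α⃗(ι'(u⃗)))) and such that adom(s0) ⊆ C. Then P also satisfies the epistemic condition (2) of uniformity: if s ~_i t and s⊕t ≃ s'⊕t', then s' ~_i t'. Hence P is uniform. -/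
/-!  Common formalisation of artifact-centric multi-agent systems (AC-MAS). -/

open Set

/-! ### Auxiliary lemmas for Statement 6 -/

section Aux

variable {D : Schema} {U : Type}

lemma Inst.ext' {I J : Inst D U} (h : I.rel = J.rel) : I = J := by
  cases I; cases J; cases h; rfl

lemma Inst.mem_adom_of_rel {I : Inst D U} {r : D.Rel} {t : Fin (D.arity r) → U}
    (ht : t ∈ I.rel r) (j : Fin (D.arity r)) : t j ∈ I.adom :=
  ⟨r, t, ht, j, rfl⟩

lemma Inst.adom_finite (I : Inst D U) : I.adom.Finite := by
  have hsub : I.adom ⊆ ⋃ r : D.Rel, ⋃ t ∈ I.rel r, Set.range t := by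
    rintro u ⟨r, t, ht, j, rfl⟩
    exact Set.mem_iUnion.2 ⟨r, Set.mem_iUnion.2 ⟨t, Set.mem_iUnion.2 ⟨ht, ⟨j, rfl⟩⟩⟩⟩
  exact Set.Finite.subset
    (Set.finite_iUnion fun r => (I.finite r).biUnion fun t _ => Set.finite_range t) hsub

lemma adomF_finite {X : Type} [Finite X] (s : X → Inst D U) : (adomF s).Finite :=
  Set.finite_iUnion fun i => (s i).adom_finite

lemma mem_adomF {X : Type} {s : X → Inst D U} {i : X} {u : U}
    (h : u ∈ (s i).adom) : u ∈ adomF s :=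
  Set.mem_iUnion.2 ⟨i, h⟩

lemma Inst.adom_map {C : Type} (f : C → U) (I : Inst D C) :
    (I.map f).adom = f '' I.adom := by
  ext u
  constructor
  · rintro ⟨r, t, ⟨v, hv, rfl⟩, j, rfl⟩
    exact ⟨v j, ⟨r, v, hv, j, rfl⟩, rfl⟩
  · rintro ⟨x, ⟨r, t, ht, j, rfl⟩, rfl⟩
    exact ⟨r, fun k => f (t k), ⟨t, ht, rfl⟩, j, rfl⟩

lemma Inst.oplus_map (f : U → U) (I J : Inst D U) :
    (I.oplus J).map f = (I.map f).oplus (J.map f) := by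
  apply Inst.ext'
  funext r
  cases r <;> rfl

/-- Any injection on a finite set extends to a permutation of the whole domain. -/
lemma perm_extend {A : Set U} (hA : A.Finite) {f : U → U}
    (hf : Set.InjOn f A) : ∃ g : U ≃ U, ∀ a ∈ A, g a = f a := by
  classical
  let F : ↥A ↪ U := ⟨fun a => f a, fun a b hab => Subtype.ext (hf a.2 b.2 hab)⟩
  have hne : Nonempty (U ≃ U) := ⟨Equiv.refl U⟩
  cases finite_or_infinite U with
  | inl h =>
    obtain ⟨g, hg⟩ := Cardinal.extend_function_finite F hne
    exact ⟨g, fun a ha => hg ⟨a, ha⟩⟩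
  | inr h =>
    have : Finite ↥A := hA
    have hlt : Cardinal.mk ↥A < Cardinal.mk U :=
      lt_of_lt_of_le (Cardinal.lt_aleph0_of_finite ↥A) (Cardinal.aleph0_le_mk U)
    obtain ⟨g, hg⟩ := Cardinal.extend_function_of_lt F hlt hne
    exact ⟨g, fun a ha => hg ⟨a, ha⟩⟩

variable {C : Type}

lemma image_range_cst {cst : C → U} {g : U → U} (hg : ∀ c, g (cst c) = cst c) :
    g '' Set.range cst = Set.range cst := by
  ext u
  constructor
  · rintro ⟨_, ⟨c, rfl⟩, rfl⟩
    exact ⟨c, (hg c).symm⟩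
  · rintro ⟨c, rfl⟩
    exact ⟨cst c, ⟨c, rfl⟩, hg c⟩

/-- A constant-preserving permutation is a witness from any family to its image. -/
lemma permWitness {X : Type} (cst : C → U) (g : U ≃ U)
    (hg : ∀ c, g (cst c) = cst c) (s : X → Inst D U) :
    IsWitness cst cst g s (fun i => (s i).map g) := by
  have hadom : adomF (fun i => (s i).map g) = g '' adomF s := by
    simp only [adomF, Inst.adom_map, Set.image_iUnion]
  refine ⟨?_, hg, ?_⟩
  · have himg : adomF (fun i => (s i).map g) ∪ Set.range cst
        = g '' (adomF s ∪ Set.range cst) := by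
      rw [Set.image_union, hadom, image_range_cst hg]
    rw [himg]
    exact (g.injective.injOn).bijOn_image
  · intro i r t _
    constructor
    · intro h
      exact ⟨t, h, rfl⟩
    · rintro ⟨v, hv, hveq⟩
      have : v = t := funext fun j => g.injective (congrFun hveq j)
      rwa [← this]

variable {n : ℕ}

lemma adomF_oplus_left {s t : GState D n U} : adomF s ⊆ adomF (oplusG s t) := by
  intro u hu
  obtain ⟨i, hi⟩ := Set.mem_iUnion.1 hu
  obtain ⟨r, w, hw, j, rfl⟩ := hi
  exact mem_adomF (i := i) ⟨Sum.inl r, w, hw, j, rfl⟩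

lemma adomF_oplus_right {s t : GState D n U} : adomF t ⊆ adomF (oplusG s t) := by
  intro u hu
  obtain ⟨i, hi⟩ := Set.mem_iUnion.1 hu
  obtain ⟨r, w, hw, j, rfl⟩ := hi
  exact mem_adomF (i := i) ⟨Sum.inr r, w, hw, j, rfl⟩

lemma oplusG_map (g : U → U) (s t : GState D n U) :
    (fun i => ((oplusG s t) i).map g) = oplusG (fun i => (s i).map g) (fun i => (t i).map g) :=
  funext fun i => Inst.oplus_map g (s i) (t i)

/-- A witness for `s ⊕ t ≃ s' ⊕ t'` restricts to a witness for `t ≃ t'`. -/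
lemma witness_restrict (cst : C → U) {ι : U → U} {s t s' t' : GState D n U}
    (h : IsWitness cst cst ι (oplusG s t) (oplusG s' t')) :
    IsWitness cst cst ι t t' := by
  obtain ⟨hbij, hc, hrel⟩ := h
  have hsubA : adomF t ∪ Set.range cst ⊆ adomF (oplusG s t) ∪ Set.range cst :=
    Set.union_subset_union_left _ adomF_oplus_right
  refine ⟨⟨?_, hbij.injOn.mono hsubA, ?_⟩, hc, ?_⟩
  · -- MapsTo
    rintro u (hu | ⟨c, rfl⟩)
    · obtain ⟨i, hi⟩ := Set.mem_iUnion.1 hu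
      obtain ⟨r, w, hw, j, rfl⟩ := hi
      have hent : ∀ k, w k ∈ adomF (oplusG s t) ∪ Set.range cst := fun k =>
        Or.inl (mem_adomF (i := i) (⟨Sum.inr r, w, hw, k, rfl⟩ :
          w k ∈ ((oplusG s t) i).adom))
      have h2 : (fun k => ι (w k)) ∈ (t' i).rel r := (hrel i (Sum.inr r) w hent).1 hw
      exact Or.inl (mem_adomF (i := i) (Inst.mem_adom_of_rel h2 j))
    · exact Or.inr ⟨c, (hc c).symm⟩
  · -- SurjOn
    rintro u (hu | ⟨c, rfl⟩)
    · obtain ⟨i, hi⟩ := Set.mem_iUnion.1 hu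
      obtain ⟨r, w, hw, j, rfl⟩ := hi
      have hent : ∀ k, w k ∈ ι '' (adomF (oplusG s t) ∪ Set.range cst) := by
        intro k
        rw [hbij.image_eq]
        exact Or.inl (mem_adomF (i := i) (⟨Sum.inr r, w, hw, k, rfl⟩ :
          w k ∈ ((oplusG s' t') i).adom))
      choose v hv1 hv2 using hent
      have hw' : (fun k => ι (v k)) = w := funext hv2
      have hvrel : v ∈ (t i).rel r := by
        have := (hrel i (Sum.inr r) v hv1).2
          (by show (fun k => ι (v k)) ∈ (t' i).rel r; rw [hw']; exact hw)
        exact this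
      exact ⟨v j, Or.inl (mem_adomF (i := i) (Inst.mem_adom_of_rel hvrel j)), hv2 j⟩
    · exact ⟨cst c, Or.inr ⟨c, rfl⟩, hc c⟩
  · intro i r w hw
    exact hrel i (Sum.inr r) w fun j => hsubA (hw j)

/-- An isomorphism witness between global states comes from a constant-preserving
permutation of the domain. -/
lemma iso_to_perm [Fintype C] (cst : C → U) {ι : U → U} {t t' : GState D n U}
    (h : IsWitness cst cst ι t t') :
    ∃ g : U ≃ U, (∀ c, g (cst c) = cst c) ∧ t' = fun i => (t i).map g := by
  obtain ⟨hbij, hc, hrel⟩ := h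
  obtain ⟨g, hg⟩ := perm_extend ((adomF_finite t).union (Set.finite_range cst)) hbij.injOn
  have hgc : ∀ c, g (cst c) = cst c := fun c =>
    (hg _ (Or.inr ⟨c, rfl⟩)).trans (hc c)
  refine ⟨g, hgc, funext fun i => Inst.ext' ?_⟩
  funext r
  ext w
  constructor
  · intro hw
    have hent : ∀ k, w k ∈ ι '' (adomF t ∪ Set.range cst) := by
      intro k
      rw [hbij.image_eq]
      exact Or.inl (mem_adomF (i := i) (Inst.mem_adom_of_rel hw k))
    choose v hv1 hv2 using hent
    have hw' : (fun k => ι (v k)) = w := funext hv2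
    have hvrel : v ∈ (t i).rel r := (hrel i r v hv1).2 (by rw [hw']; exact hw)
    refine ⟨v, hvrel, funext fun k => ?_⟩
    show g (v k) = w k
    rw [hg _ (hv1 k)]
    exact hv2 k
  · rintro ⟨v, hv, rfl⟩
    have hent : ∀ k, v k ∈ adomF t ∪ Set.range cst := fun k =>
      Or.inl (mem_adomF (i := i) (Inst.mem_adom_of_rel hv k))
    have := (hrel i r v hent).1 hv
    have heq : (fun k => ι (v k)) = (fun k => g (v k)) :=
      funext fun k => (hg _ (hent k)).symm
    rw [heq] at this
    exact this

/-- Any state isomorphic to `s0` (when `adom s0 ⊆ C`) equals `s0`. -/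
lemma iso_s0_eq (cst : C → U) {ι : U → U} {s0 s0' : GState D n U}
    (h0 : adomF s0 ⊆ Set.range cst) (h : IsWitness cst cst ι s0 s0') : s0' = s0 := by
  obtain ⟨hbij, hc, hrel⟩ := h
  have hι_id : ∀ u ∈ Set.range cst, ι u = u := by
    rintro u ⟨c, rfl⟩
    exact hc c
  have hAeq : adomF s0 ∪ Set.range cst = Set.range cst :=
    Set.union_eq_self_of_subset_left h0
  have htgt : adomF s0' ∪ Set.range cst = Set.range cst := by
    rw [← hbij.image_eq, hAeq, image_range_cst hc]
  have h0' : adomF s0' ⊆ Set.range cst := htgt ▸ Set.subset_union_left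
  funext i
  apply Inst.ext'
  funext r
  ext w
  constructor
  · intro hw
    have hent : ∀ k, w k ∈ adomF s0 ∪ Set.range cst := fun k =>
      Or.inr (h0' (mem_adomF (i := i) (Inst.mem_adom_of_rel hw k)))
    have hid : (fun k => ι (w k)) = w :=
      funext fun k => hι_id _ (hAeq ▸ hent k)
    exact (hrel i r w hent).2 (by rw [hid]; exact hw)
  · intro hw
    have hent : ∀ k, w k ∈ adomF s0 ∪ Set.range cst := fun k =>
      Or.inl (mem_adomF (i := i) (Inst.mem_adom_of_rel hw k))
    have hid : (fun k => ι (w k)) = w :=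
      funext fun k => hι_id _ (hAeq ▸ hent k)
    have := (hrel i r w hent).1 hw
    rwa [hid] at this

/-- Under condition (1) and `adom s0 ⊆ C`, the set of reachable states is closed
under isomorphism. -/
lemma S_closed_iso [Fintype C] {sig : Fin (n+1) → AgentSig}
    {Ag : ∀ i, Agent D (sig i) U} (cst : C → U) (M : ACMAS D sig Ag)
    (hM : M.Std) (h1 : UniformT cst M) (h0 : adomF M.s0 ⊆ Set.range cst) :
    ∀ t ∈ M.S, ∀ (t' : GState D n U) (ι : U → U),
      IsWitness cst cst ι t t' → t' ∈ M.S := by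
  intro t ht
  have hreach : Relation.ReflTransGen M.Tr M.s0 t := by
    have := hM.2 ▸ ht
    exact this
  clear ht
  induction hreach with
  | refl =>
    intro t' ι hw
    rw [iso_s0_eq cst h0 hw]
    exact M.s0_mem
  | @tail u v hu htr ih =>
    intro v' ι hw
    obtain ⟨g, hgc, hveq⟩ := iso_to_perm cst hw
    subst hveq
    set u' : GState D n U := fun i => (u i).map g with hu'def
    have hu'S : u' ∈ M.S := ih u' g (permWitness cst g hgc u)
    have huS : u ∈ M.S := by
      rw [hM.2]
      exact hu
    have hvS : v ∈ M.S := by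
      rw [hM.2]
      exact hu.tail htr
    obtain ⟨a, hva⟩ := htr
    have hwop : IsWitness cst cst (⇑g) (oplusG u v)
        (oplusG u' (fun i => (v i).map g)) := by
      have := permWitness cst g hgc (oplusG u v)
      rwa [oplusG_map] at this
    have hstep := h1 u huS v hvS u' hu'S (fun i => (v i).map g) a hva (⇑g) hwop (⇑g)
      (fun _ _ => rfl) (g.injective.injOn) hgc
    exact M.tau_closed u' hu'S _ hstep

end Aux

/-! ### STATEMENT 6 -/

theorem statement6
    {D : Schema} {C : Type} [Fintype C] {n : ℕ}
    {sig : Fin (n+1) → AgentSig} {U : Type}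
    (cst : C → U) (hcst : Function.Injective cst)
    {Ag : ∀ i, Agent D (sig i) U} (M : ACMAS D sig Ag)
    (hM : M.Std)
    (h1 : UniformT cst M)
    (h0 : adomF M.s0 ⊆ Set.range cst) :
    UniformE cst M ∧ Uniform cst M := by
  have hE : UniformE cst M := by
    intro s hs t ht s' hs' t' i hEpi hIso
    obtain ⟨ι, hW⟩ := hIso
    have ht'S : t' ∈ M.S :=
      S_closed_iso cst M hM h1 h0 t ht t' ι (witness_restrict cst hW)
    refine ⟨hs', ht'S, ?_⟩
    obtain ⟨hbij, hc, hrel⟩ := hW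
    have hst : s i.succ = t i.succ := hEpi.2.2
    apply Inst.ext'
    funext r
    ext w
    constructor
    · intro hw
      -- w ∈ (s' i.succ).rel r
      have hent : ∀ k, w k ∈ ι '' (adomF (oplusG s t) ∪ Set.range cst) := by
        intro k
        rw [hbij.image_eq]
        exact Or.inl (mem_adomF (i := i.succ)
          (⟨Sum.inl r, w, hw, k, rfl⟩ : w k ∈ ((oplusG s' t') i.succ).adom))
      choose v hv1 hv2 using hent
      have hw' : (fun k => ι (v k)) = w := funext hv2
      have hvs : v ∈ (s i.succ).rel r := (hrel i.succ (Sum.inl r) v hv1).2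
        (by show (fun k => ι (v k)) ∈ (s' i.succ).rel r; rw [hw']; exact hw)
      have hvt : v ∈ (t i.succ).rel r := hst ▸ hvs
      have h2 : (fun k => ι (v k)) ∈ (t' i.succ).rel r :=
        (hrel i.succ (Sum.inr r) v hv1).1 hvt
      rwa [hw'] at h2
    · intro hw
      -- w ∈ (t' i.succ).rel r
      have hent : ∀ k, w k ∈ ι '' (adomF (oplusG s t) ∪ Set.range cst) := by
        intro k
        rw [hbij.image_eq]
        exact Or.inl (mem_adomF (i := i.succ)
          (⟨Sum.inr r, w, hw, k, rfl⟩ : w k ∈ ((oplusG s' t') i.succ).adom))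
      choose v hv1 hv2 using hent
      have hw' : (fun k => ι (v k)) = w := funext hv2
      have hvt : v ∈ (t i.succ).rel r := (hrel i.succ (Sum.inr r) v hv1).2
        (by show (fun k => ι (v k)) ∈ (t' i.succ).rel r; rw [hw']; exact hw)
      have hvs : v ∈ (s i.succ).rel r := hst ▸ hvt
      have h2 : (fun k => ι (v k)) ∈ (s' i.succ).rel r :=
        (hrel i.succ (Sum.inl r) v hv1).1 hvs
      rwa [hw'] at h2
  exact ⟨hE, h1, hE⟩
end
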